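/- If the Markov chain X is reversible, i.e., μ_x P_{x→x'} = μ_{x'} P_{x'→x} for all x, x' ∈ 𝒳, then I(X_1; X_2 | Y_2) = I(X_2; X_1 | Y_1); consequently C_L(X,W) ≤ I(X_1; X_2 | Y_2) and hence C_P(X,W) ≥ 2·C_L(X,W). -/

import Mathlib

open Filter Real

/-- Shannon entropy (base 2) of a finitely supported probability mass function. -/
noncomputable def ent {A : Type} [Fintype A] (q : A → ℝ) : ℝ :=
  - ∑ a, q a * Real.logb 2 (q a)

/-- Joint law of the first `n+1` samples of a Markov chain with initial distribution `μ`
and transition matrix `P`. -/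
noncomputable def chainJoint {X : Type} (μ : X → ℝ) (P : X → X → ℝ) (n : ℕ)
    (x : Fin (n + 1) → X) : ℝ :=
  μ (x 0) * ∏ i : Fin n, P (x i.castSucc) (x i.succ)

/-- Joint law of `(Y_1, …, Y_{n+1})`, where `Y` is the stationary process obtained by
observing the stationary Markov chain `X ~ (μ, P)` through the channel `W`. -/
noncomputable def obsJoint {X Y : Type} [Fintype X] (μ : X → ℝ) (P : X → X → ℝ)
    (W : X → Y → ℝ) (n : ℕ) (y : Fin (n + 1) → Y) : ℝ :=
  ∑ x : Fin (n + 1) → X, chainJoint μ P n x * ∏ i, W (x i) (y i)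

/-- A finite stochastic matrix is irreducible and aperiodic iff it is primitive, i.e., some
power (and hence all larger powers) of it is entrywise positive. -/
def IrreducibleAperiodic {X : Type} [Fintype X] [DecidableEq X] (P : Matrix X X ℝ) : Prop :=
  ∃ N : ℕ, ∀ n ≥ N, ∀ x x' : X, 0 < (P ^ n) x x'

section Defs

variable {X Y : Type} [Fintype X] [Fintype Y]

/-- Marginal distribution `ν` of each `Y_k`: `νᵀ = μᵀ W`. -/
noncomputable def nuDist (μ : X → ℝ) (W : X → Y → ℝ) : Y → ℝ := fun y => ∑ x, μ x * W x y

/-- Joint distribution of `(Y_1, Y_2)`. -/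
noncomputable def jointYY (μ : X → ℝ) (P : X → X → ℝ) (W : X → Y → ℝ) : Y × Y → ℝ :=
  fun p => ∑ x, ∑ x', μ x * W x p.1 * P x x' * W x' p.2

/-- Joint distribution of `(X_1, Y_2)`. -/
noncomputable def jointX1Y2 (μ : X → ℝ) (P : X → X → ℝ) (W : X → Y → ℝ) : X × Y → ℝ :=
  fun p => ∑ x', μ p.1 * P p.1 x' * W x' p.2

/-- Joint distribution of `(X_2, Y_1)`. -/
noncomputable def jointX2Y1 (μ : X → ℝ) (P : X → X → ℝ) (W : X → Y → ℝ) : X × Y → ℝ :=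
  fun p => ∑ x, μ x * W x p.2 * P x p.1

/-- Joint distribution of `(X_1, X_2)`. -/
noncomputable def jointXX (μ : X → ℝ) (P : X → X → ℝ) : X × X → ℝ :=
  fun p => μ p.1 * P p.1 p.2

/-- Joint distribution of `(X_1, Y_1)`. -/
noncomputable def jointX1Y1 (μ : X → ℝ) (W : X → Y → ℝ) : X × Y → ℝ :=
  fun p => μ p.1 * W p.1 p.2

/-- Joint distribution of `(X_2, Y_2)`. -/
noncomputable def jointX2Y2 (μ : X → ℝ) (P : X → X → ℝ) (W : X → Y → ℝ) : X × Y → ℝ :=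
  fun p => ∑ x, μ x * P x p.1 * W p.1 p.2

/-- Joint distribution of `(X_1, X_2, Y_2)`. -/
noncomputable def jointX1X2Y2 (μ : X → ℝ) (P : X → X → ℝ) (W : X → Y → ℝ) :
    X × X × Y → ℝ :=
  fun p => μ p.1 * P p.1 p.2.1 * W p.2.1 p.2.2

/-- Joint distribution of `(X_1, X_2, Y_1)`. -/
noncomputable def jointX1X2Y1 (μ : X → ℝ) (P : X → X → ℝ) (W : X → Y → ℝ) :
    X × X × Y → ℝ :=
  fun p => μ p.1 * W p.1 p.2.2 * P p.1 p.2.1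

/-- Joint distribution of `(X_1, Y_1, Y_2)`. -/
noncomputable def jointX1Y1Y2 (μ : X → ℝ) (P : X → X → ℝ) (W : X → Y → ℝ) :
    X × Y × Y → ℝ :=
  fun p => ∑ x', μ p.1 * W p.1 p.2.1 * P p.1 x' * W x' p.2.2

/-- Conditional entropy `H(Y_2 | Y_1) = H(Y_1, Y_2) − H(Y_1)`. -/
noncomputable def HY2gY1 (μ : X → ℝ) (P : X → X → ℝ) (W : X → Y → ℝ) : ℝ :=
  ent (jointYY μ P W) - ent (nuDist μ W)

/-- Conditional entropy `H(Y_2 | X_1) = H(X_1, Y_2) − H(X_1)`. -/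
noncomputable def HY2gX1 (μ : X → ℝ) (P : X → X → ℝ) (W : X → Y → ℝ) : ℝ :=
  ent (jointX1Y2 μ P W) - ent μ

/-- Conditional entropy `H(Y_1 | X_2) = H(X_2, Y_1) − H(X_2)`. -/
noncomputable def HY1gX2 (μ : X → ℝ) (P : X → X → ℝ) (W : X → Y → ℝ) : ℝ :=
  ent (jointX2Y1 μ P W) - ent μ

/-- Mutual information `I(X_1; X_2) = H(X_1) + H(X_2) − H(X_1, X_2)` (stationary case). -/
noncomputable def IX1X2 (μ : X → ℝ) (P : X → X → ℝ) : ℝ :=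
  2 * ent μ - ent (jointXX μ P)

/-- Mutual information `I(Y_1; Y_2) = H(Y_1) + H(Y_2) − H(Y_1, Y_2)` (stationary case). -/
noncomputable def IY1Y2 (μ : X → ℝ) (P : X → X → ℝ) (W : X → Y → ℝ) : ℝ :=
  2 * ent (nuDist μ W) - ent (jointYY μ P W)

/-- The lumpability cost `C_L(X, W) = H(Y_2|Y_1) − H(Y_2|X_1)`. -/
noncomputable def CL (μ : X → ℝ) (P : X → X → ℝ) (W : X → Y → ℝ) : ℝ :=
  HY2gY1 μ P W - HY2gX1 μ P W

/-- The predictability cost `C_P(X, W) = I(X_1;X_2) − I(Y_1;Y_2)`. -/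
noncomputable def CP (μ : X → ℝ) (P : X → X → ℝ) (W : X → Y → ℝ) : ℝ :=
  IX1X2 μ P - IY1Y2 μ P W

/-- The aggregation cost `C_β(X, W) = (1−2β)·C_L(X,W) + β·C_P(X,W)`. -/
noncomputable def Cbeta (μ : X → ℝ) (P : X → X → ℝ) (W : X → Y → ℝ) (β : ℝ) : ℝ :=
  (1 - 2 * β) * CL μ P W + β * CP μ P W

/-- `δ_β(X,W) = (1−β)·(H(Y_2|Y_1) − H̄(Y)) + β·(I(X_1;X_2) − H(Y_1) + H̄(Y))`, where `hbarY`
denotes the entropy rate `H̄(Y)`. -/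
noncomputable def deltaBeta (μ : X → ℝ) (P : X → X → ℝ) (W : X → Y → ℝ)
    (hbarY β : ℝ) : ℝ :=
  (1 - β) * (HY2gY1 μ P W - hbarY) + β * (IX1X2 μ P - ent (nuDist μ W) + hbarY)

/-- Conditional mutual information
`I(X_1; X_2 | Y_2) = H(X_1,Y_2) + H(X_2,Y_2) − H(X_1,X_2,Y_2) − H(Y_2)`. -/
noncomputable def IX1X2gY2 (μ : X → ℝ) (P : X → X → ℝ) (W : X → Y → ℝ) : ℝ :=
  ent (jointX1Y2 μ P W) + ent (jointX2Y2 μ P W) - ent (jointX1X2Y2 μ P W) -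
    ent (nuDist μ W)

/-- Conditional mutual information
`I(X_2; X_1 | Y_1) = H(X_1,Y_1) + H(X_2,Y_1) − H(X_1,X_2,Y_1) − H(Y_1)`. -/
noncomputable def IX2X1gY1 (μ : X → ℝ) (P : X → X → ℝ) (W : X → Y → ℝ) : ℝ :=
  ent (jointX1Y1 μ W) + ent (jointX2Y1 μ P W) - ent (jointX1X2Y1 μ P W) -
    ent (nuDist μ W)

/-- Conditional mutual information
`I(Y_2; X_1 | Y_1) = H(X_1,Y_1) + H(Y_1,Y_2) − H(X_1,Y_1,Y_2) − H(Y_1)`. -/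
noncomputable def IY2X1gY1 (μ : X → ℝ) (P : X → X → ℝ) (W : X → Y → ℝ) : ℝ :=
  ent (jointX1Y1 μ W) + ent (jointYY μ P W) - ent (jointX1Y1Y2 μ P W) -
    ent (nuDist μ W)

/-- Mutual information `I(X_2; Y_1) = H(X_2) + H(Y_1) − H(X_2, Y_1)`. -/
noncomputable def IX2Y1 (μ : X → ℝ) (P : X → X → ℝ) (W : X → Y → ℝ) : ℝ :=
  ent μ + ent (nuDist μ W) - ent (jointX2Y1 μ P W)

/-- The deterministic channel induced by an aggregation function `g : X → Y`:
`W_{x→y} = 1` iff `y = g x`. -/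
noncomputable def detW [DecidableEq Y] (g : X → Y) : X → Y → ℝ :=
  fun x y => if g x = y then 1 else 0

/-- The row-stochastic matrix `R = P·W` for a deterministic aggregation `g`:
`R_{x→y} = ∑_{x' : g x' = y} P_{x→x'}`. -/
noncomputable def Rmat [DecidableEq Y] (P : X → X → ℝ) (g : X → Y) : X → Y → ℝ :=
  fun x y => ∑ x', if g x' = y then P x x' else 0

/-- Kullback–Leibler divergence (base 2) between two probability mass functions on `Y`. -/
noncomputable def klDiv2 (p q : Y → ℝ) : ℝ :=
  ∑ y, p y * Real.logb 2 (p y / q y)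

end Defs

/-!
Reversibility makes `(X₁, X₂)` and `(X₂, X₁)` equal in law, and forces stationarity. Hence
`(X₁, Y₂)` has the law of `(X₂, Y₁)`, `(X₂, Y₂)` that of `(X₁, Y₁)`, and `(X₁, X₂, Y₂)` that of
`(X₂, X₁, Y₁)`, which gives `I(X₁; X₂ | Y₂) = I(X₂; X₁ | Y₁)`.

Since `Y₁` and `Y₂` are conditionally independent given `X₁`, `C_L = I(Y₂; X₁ | Y₁)`, and since
`Y₂` is produced from `X₂` alone, `I(X₂; X₁ | Y₁) - I(Y₂; X₁ | Y₁) = I(X₁; X₂ | Y₁, Y₂) ≥ 0`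
(data processing). Finally the chain rule gives `C_P = C_L + I(X₁; X₂ | Y₂)`, so both
inequalities reduce to `C_L ≤ I(X₁; X₂ | Y₂)`.
-/

section Entropy

variable {A B C : Type} [Fintype A] [Fintype B] [Fintype C]

theorem ent_eq_sum_negMulLog (q : A → ℝ) : ent q = (∑ a, negMulLog (q a)) / log 2 := by
  simp only [ent, negMulLog, logb, Finset.sum_div, ← Finset.sum_neg_distrib]
  exact Finset.sum_congr rfl fun a _ => by ring

theorem ent_eq_neg_sum_mul_log (q : A → ℝ) : ent q = -(∑ a, q a * log (q a)) / log 2 := by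
  simp only [ent_eq_sum_negMulLog, negMulLog, neg_mul, Finset.sum_neg_distrib]

theorem ent_comp_equiv (e : A ≃ B) (q : B → ℝ) : ent (q ∘ e) = ent q := by
  simp only [ent, Function.comp_apply, e.sum_comp (fun b => q b * logb 2 (q b))]

theorem ent_mul_kernel (r : A → ℝ) (K : A → B → ℝ) (hK : ∀ a, ∑ b, K a b = 1) :
    ent (fun p : A × B => r p.1 * K p.1 p.2) = ent r + ∑ a, r a * ent (K a) := by
  simp only [ent_eq_sum_negMulLog, Fintype.sum_prod_type, negMulLog_mul, Finset.sum_add_distrib,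
    ← Finset.sum_mul, ← Finset.mul_sum, hK, one_mul, add_div, Finset.sum_div, mul_div_assoc]

theorem ent_assoc_mul_kernel (r : A × B → ℝ) (K : A × B → C → ℝ)
    (hK : ∀ ab, ∑ c, K ab c = 1) :
    ent (fun z : A × B × C => r (z.1, z.2.1) * K (z.1, z.2.1) z.2.2) =
      ent r + ∑ ab, r ab * ent (K ab) := by
  rw [← ent_mul_kernel r K hK, ← ent_comp_equiv (Equiv.prodAssoc A B C)]
  rfl

theorem sum_mul_log_le_sum_mul_log {p q : A → ℝ} (hp : ∀ a, 0 ≤ p a) (hq : ∀ a, 0 ≤ q a)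
    (hpq : ∀ a, 0 < p a → 0 < q a) (hsum : ∑ a, q a ≤ ∑ a, p a) :
    ∑ a, p a * log (q a) ≤ ∑ a, p a * log (p a) := by
  have hterm : ∀ a, p a * log (q a) - p a * log (p a) ≤ q a - p a := by
    intro a
    rcases (hp a).eq_or_lt with h | h
    · simp [← h, hq a]
    · rw [← mul_sub, ← log_div (hpq a h).ne' h.ne']
      calc p a * log (q a / p a) ≤ p a * (q a / p a - 1) :=
            mul_le_mul_of_nonneg_left (log_le_sub_one_of_pos (div_pos (hpq a h) h)) h.le
        _ = q a - p a := by field_simp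
  have := Finset.sum_le_sum fun a (_ : a ∈ Finset.univ) => hterm a
  rw [Finset.sum_sub_distrib, Finset.sum_sub_distrib] at this
  linarith

end Entropy

section CondMutInf

variable {A B C : Type} [Fintype A] [Fintype B] [Fintype C]

noncomputable def margAC (p : A × B × C → ℝ) : A × C → ℝ := fun ac => ∑ b, p (ac.1, b, ac.2)

noncomputable def margBC (p : A × B × C → ℝ) : B × C → ℝ := fun bc => ∑ a, p (a, bc)

noncomputable def margC (p : A × B × C → ℝ) : C → ℝ := fun c => ∑ a, ∑ b, p (a, b, c)

noncomputable def condMutInf (p : A × B × C → ℝ) : ℝ :=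
  ent (margAC p) + ent (margBC p) - ent p - ent (margC p)

theorem sum_mul_margAC (p : A × B × C → ℝ) (f : A × C → ℝ) :
    ∑ z, p z * f (z.1, z.2.2) = ∑ ac, margAC p ac * f ac := by
  simp only [margAC, Fintype.sum_prod_type, Finset.sum_mul]
  exact Finset.sum_congr rfl fun a _ => Finset.sum_comm

theorem sum_mul_margBC (p : A × B × C → ℝ) (f : B × C → ℝ) :
    ∑ z, p z * f z.2 = ∑ bc, margBC p bc * f bc := by
  rw [Fintype.sum_prod_type, Finset.sum_comm]
  simp only [margBC, Finset.sum_mul]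

theorem sum_mul_margC (p : A × B × C → ℝ) (f : C → ℝ) :
    ∑ z, p z * f z.2.2 = ∑ c, margC p c * f c := by
  rw [sum_mul_margAC p (fun ac => f ac.2), Fintype.sum_prod_type, Finset.sum_comm]
  simp only [margC, margAC, Finset.sum_mul]

theorem sum_margC (p : A × B × C → ℝ) : ∑ c, margC p c = ∑ z, p z := by
  simpa using (sum_mul_margC p fun _ => 1).symm

theorem condMutInf_nonneg {p : A × B × C → ℝ} (hp : ∀ z, 0 ≤ p z) : 0 ≤ condMutInf p := by
  have hAC0 : ∀ ac, 0 ≤ margAC p ac := fun _ => Finset.sum_nonneg fun _ _ => hp _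
  have hBC0 : ∀ bc, 0 ≤ margBC p bc := fun _ => Finset.sum_nonneg fun _ _ => hp _
  have hC0 : ∀ c, 0 ≤ margC p c := fun c => Finset.sum_nonneg fun a _ => hAC0 (a, c)
  have hAC : ∀ z, p z ≤ margAC p (z.1, z.2.2) := fun z =>
    Finset.single_le_sum (f := fun b => p (z.1, b, z.2.2)) (fun _ _ => hp _)
      (Finset.mem_univ z.2.1)
  have hBC : ∀ z, p z ≤ margBC p z.2 := fun z =>
    Finset.single_le_sum (f := fun a => p (a, z.2)) (fun _ _ => hp _) (Finset.mem_univ z.1)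
  have hC : ∀ z : A × B × C, margAC p (z.1, z.2.2) ≤ margC p z.2.2 := fun z =>
    Finset.single_le_sum (f := fun a => margAC p (a, z.2.2)) (fun _ _ => hAC0 _)
      (Finset.mem_univ z.1)
  -- Gibbs' inequality against `p(a,c) p(b,c) / p(c)`, which has the same total mass as `p`.
  set q : A × B × C → ℝ := fun z => margAC p (z.1, z.2.2) * margBC p z.2 / margC p z.2.2
  have hq0 : ∀ z, 0 ≤ q z := fun z => div_nonneg (mul_nonneg (hAC0 _) (hBC0 _)) (hC0 _)
  have hpq : ∀ z, 0 < p z → 0 < q z := fun z h =>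
    div_pos (mul_pos (h.trans_le (hAC z)) (h.trans_le (hBC z)))
      ((h.trans_le (hAC z)).trans_le (hC z))
  have hq_sum : ∑ z, q z = ∑ z, p z := by
    calc ∑ z, q z = ∑ c, (∑ a, margAC p (a, c)) * (∑ b, margBC p (b, c)) / margC p c := by
          simp only [q, Fintype.sum_prod_type, Finset.sum_mul_sum, Finset.sum_div]
          exact (Finset.sum_congr rfl fun _ _ => Finset.sum_comm).trans Finset.sum_comm
      _ = ∑ c, margC p c := by
          refine Finset.sum_congr rfl fun c _ => ?_
          have hB : ∑ b, margBC p (b, c) = margC p c := Finset.sum_comm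
          rw [hB]
          exact mul_self_div_self _
      _ = ∑ z, p z := sum_margC p
  have hlog : ∀ z, p z * log (q z) = p z * log (margAC p (z.1, z.2.2)) +
      p z * log (margBC p z.2) - p z * log (margC p z.2.2) := by
    intro z
    rcases (hp z).eq_or_lt with h | h
    · simp [← h]
    have hA := h.trans_le (hAC z)
    rw [log_div (mul_pos hA (h.trans_le (hBC z))).ne' (hA.trans_le (hC z)).ne',
      log_mul hA.ne' (h.trans_le (hBC z)).ne']
    ring
  have gibbs := sum_mul_log_le_sum_mul_log hp hq0 hpq hq_sum.le
  simp only [hlog, Finset.sum_add_distrib, Finset.sum_sub_distrib, sum_mul_margAC p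
    (fun ac => log (margAC p ac)), sum_mul_margBC p (fun bc => log (margBC p bc)),
    sum_mul_margC p (fun c => log (margC p c))] at gibbs
  rw [condMutInf, ent_eq_neg_sum_mul_log, ent_eq_neg_sum_mul_log, ent_eq_neg_sum_mul_log,
    ent_eq_neg_sum_mul_log, ← add_div, ← sub_div, ← sub_div]
  exact div_nonneg (by linarith) (log_nonneg one_le_two)

end CondMutInf

section MarkovChain

variable {X Y : Type} [Fintype X] {μ : X → ℝ} {P : X → X → ℝ} {W : X → Y → ℝ}

theorem stationary_of_reversible (hP1 : ∀ x, ∑ x', P x x' = 1)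
    (hrev : ∀ x x', μ x * P x x' = μ x' * P x' x) (x' : X) : ∑ x, μ x * P x x' = μ x' := by
  simp only [hrev _ x', ← Finset.mul_sum, hP1, mul_one]

theorem jointX2Y2_eq_jointX1Y1 (hinv : ∀ x', ∑ x, μ x * P x x' = μ x') :
    jointX2Y2 μ P W = jointX1Y1 μ W := by
  funext p
  simp only [jointX2Y2, jointX1Y1, ← Finset.sum_mul, hinv]

variable [Fintype Y]

theorem IX1X2gY2_eq_IX2X1gY1 (hinv : ∀ x', ∑ x, μ x * P x x' = μ x')
    (hrev : ∀ x x', μ x * P x x' = μ x' * P x' x) :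
    IX1X2gY2 μ P W = IX2X1gY1 μ P W := by
  have hX1Y2 : jointX1Y2 μ P W = jointX2Y1 μ P W := by
    funext p
    refine Finset.sum_congr rfl fun x _ => ?_
    rw [hrev]
    ring
  let swap : X × X × Y ≃ X × X × Y :=
    ⟨fun z => (z.2.1, z.1, z.2.2), fun z => (z.2.1, z.1, z.2.2), fun _ => rfl, fun _ => rfl⟩
  have hX1X2Y2 : jointX1X2Y2 μ P W = jointX1X2Y1 μ P W ∘ swap := by
    funext z
    simp only [jointX1X2Y2, jointX1X2Y1, Function.comp_apply, swap, Equiv.coe_fn_mk, hrev z.1]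
    ring
  rw [IX1X2gY2, IX2X1gY1, hX1Y2, jointX2Y2_eq_jointX1Y1 hinv, hX1X2Y2, ent_comp_equiv]
  ring

theorem sum_sum_mul_eq_one (hP1 : ∀ x, ∑ x', P x x' = 1) (hW1 : ∀ x, ∑ y, W x y = 1) (x : X) :
    ∑ y, ∑ x', P x x' * W x' y = 1 := by
  rw [Finset.sum_comm]
  simp only [← Finset.mul_sum, hW1, mul_one, hP1]

theorem ent_jointX1Y1 (hW1 : ∀ x, ∑ y, W x y = 1) :
    ent (jointX1Y1 μ W) = ent μ + ∑ x, μ x * ent (W x) :=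
  ent_mul_kernel μ W hW1

theorem ent_jointX1Y2 (hP1 : ∀ x, ∑ x', P x x' = 1) (hW1 : ∀ x, ∑ y, W x y = 1) :
    ent (jointX1Y2 μ P W) = ent μ + ∑ x, μ x * ent (fun y => ∑ x', P x x' * W x' y) := by
  rw [← ent_mul_kernel μ _ (sum_sum_mul_eq_one hP1 hW1)]
  congr 1
  funext p
  simp only [jointX1Y2, Finset.mul_sum, mul_assoc]

theorem ent_jointX1Y1Y2 (hP1 : ∀ x, ∑ x', P x x' = 1) (hW1 : ∀ x, ∑ y, W x y = 1) :
    ent (jointX1Y1Y2 μ P W) =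
      ent (jointX1Y1 μ W) + ∑ x, μ x * ent (fun y => ∑ x', P x x' * W x' y) := by
  have hfac : jointX1Y1Y2 μ P W = fun z => jointX1Y1 μ W (z.1, z.2.1) *
      ∑ x', P z.1 x' * W x' z.2.2 := by
    funext z
    simp only [jointX1Y1Y2, jointX1Y1, Finset.mul_sum, mul_assoc]
  rw [hfac, ent_assoc_mul_kernel (jointX1Y1 μ W) (fun q y => ∑ x', P q.1 x' * W x' y)
    fun q => sum_sum_mul_eq_one hP1 hW1 q.1, Fintype.sum_prod_type]
  simp only [jointX1Y1, mul_comm (μ _) (W _ _), mul_assoc, ← Finset.sum_mul, hW1, one_mul]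

theorem CL_eq_IY2X1gY1 (hP1 : ∀ x, ∑ x', P x x' = 1) (hW1 : ∀ x, ∑ y, W x y = 1) :
    CL μ P W = IY2X1gY1 μ P W := by
  rw [CL, HY2gY1, HY2gX1, IY2X1gY1, ent_jointX1Y1Y2 hP1 hW1, ent_jointX1Y2 hP1 hW1]
  ring

theorem ent_jointX1X2Y2 (hW1 : ∀ x, ∑ y, W x y = 1)
    (hinv : ∀ x', ∑ x, μ x * P x x' = μ x') :
    ent (jointX1X2Y2 μ P W) = ent (jointXX μ P) + ∑ x, μ x * ent (W x) := by
  refine (ent_assoc_mul_kernel (jointXX μ P) (fun q => W q.2) fun q => hW1 q.2).trans ?_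
  rw [Fintype.sum_prod_type, Finset.sum_comm]
  simp only [jointXX, ← Finset.sum_mul, hinv]

theorem CP_eq_CL_add_IX1X2gY2 (hW1 : ∀ x, ∑ y, W x y = 1)
    (hinv : ∀ x', ∑ x, μ x * P x x' = μ x') :
    CP μ P W = CL μ P W + IX1X2gY2 μ P W := by
  rw [CP, CL, IX1X2, IY1Y2, HY2gY1, HY2gX1, IX1X2gY2, jointX2Y2_eq_jointX1Y1 hinv,
    ent_jointX1X2Y2 hW1 hinv, ent_jointX1Y1 hW1]
  ring

noncomputable def jointX1X2Y1Y2 (μ : X → ℝ) (P : X → X → ℝ) (W : X → Y → ℝ) :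
    X × X × (Y × Y) → ℝ :=
  fun z => μ z.1 * W z.1 z.2.2.1 * P z.1 z.2.1 * W z.2.1 z.2.2.2

theorem ent_jointX1X2Y1Y2 (hW1 : ∀ x, ∑ y, W x y = 1) :
    ent (jointX1X2Y1Y2 μ P W) =
      ent (jointX1X2Y1 μ P W) + ∑ z, jointX1X2Y1 μ P W z * ent (W z.2.1) := by
  let e : (X × X × Y) × Y ≃ X × X × (Y × Y) :=
    ⟨fun q => (q.1.1, q.1.2.1, q.1.2.2, q.2), fun z => ((z.1, z.2.1, z.2.2.1), z.2.2.2),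
      fun _ => rfl, fun _ => rfl⟩
  rw [← ent_comp_equiv e]
  exact ent_mul_kernel (jointX1X2Y1 μ P W) (fun z => W z.2.1) fun z => hW1 z.2.1

theorem ent_margBC_jointX1X2Y1Y2 (hW1 : ∀ x, ∑ y, W x y = 1) :
    ent (margBC (jointX1X2Y1Y2 μ P W)) =
      ent (jointX2Y1 μ P W) + ∑ z, jointX1X2Y1 μ P W z * ent (W z.2.1) := by
  have hfac : margBC (jointX1X2Y1Y2 μ P W) =
      fun w => jointX2Y1 μ P W (w.1, w.2.1) * W w.1 w.2.2 := by
    funext w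
    simp only [margBC, jointX1X2Y1Y2, jointX2Y1, Finset.sum_mul]
  rw [hfac, ent_assoc_mul_kernel _ (fun q => W q.1) fun q => hW1 q.1,
    sum_mul_margBC (jointX1X2Y1 μ P W) fun w => ent (W w.1)]
  rfl

theorem IX2X1gY1_sub_IY2X1gY1 (hW1 : ∀ x, ∑ y, W x y = 1) :
    IX2X1gY1 μ P W - IY2X1gY1 μ P W = condMutInf (jointX1X2Y1Y2 μ P W) := by
  rw [condMutInf, ent_jointX1X2Y1Y2 hW1, ent_margBC_jointX1X2Y1Y2 hW1, IX2X1gY1, IY2X1gY1]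
  change _ = ent (jointX1Y1Y2 μ P W) + _ - _ - ent (jointYY μ P W)
  ring

theorem IY2X1gY1_le_IX2X1gY1 (hμ0 : ∀ x, 0 ≤ μ x) (hP0 : ∀ x x', 0 ≤ P x x')
    (hW0 : ∀ x y, 0 ≤ W x y) (hW1 : ∀ x, ∑ y, W x y = 1) :
    IY2X1gY1 μ P W ≤ IX2X1gY1 μ P W := by
  rw [← sub_nonneg, IX2X1gY1_sub_IY2X1gY1 hW1]
  exact condMutInf_nonneg fun z =>
    mul_nonneg (mul_nonneg (mul_nonneg (hμ0 _) (hW0 _ _)) (hP0 _ _)) (hW0 _ _)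

end MarkovChain

theorem reversible_condMutInf_symm_general
    {X Y : Type} [Fintype X] [Fintype Y]
    (μ : X → ℝ) (P : X → X → ℝ) (W : X → Y → ℝ)
    (hμ0 : ∀ x, 0 ≤ μ x)
    (hP0 : ∀ x x', 0 ≤ P x x') (hP1 : ∀ x, ∑ x', P x x' = 1)
    (hW0 : ∀ x y, 0 ≤ W x y) (hW1 : ∀ x, ∑ y, W x y = 1)
    (hrev : ∀ x x', μ x * P x x' = μ x' * P x' x) :
    IX1X2gY2 μ P W = IX2X1gY1 μ P W ∧
    CL μ P W ≤ IX1X2gY2 μ P W ∧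
    2 * CL μ P W ≤ CP μ P W := by
  have hinv := stationary_of_reversible hP1 hrev
  have hsymm : IX1X2gY2 μ P W = IX2X1gY1 μ P W := IX1X2gY2_eq_IX2X1gY1 hinv hrev
  have hCL : CL μ P W ≤ IX1X2gY2 μ P W := by
    rw [CL_eq_IY2X1gY1 hP1 hW1, hsymm]
    exact IY2X1gY1_le_IX2X1gY1 hμ0 hP0 hW0 hW1
  refine ⟨hsymm, hCL, ?_⟩
  rw [CP_eq_CL_add_IX1X2gY2 hW1 hinv]
  linarith

/-- If the Markov chain `X` is reversible (`μ_x P_{x→x'} = μ_{x'} P_{x'→x}`),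
then `I(X_1;X_2|Y_2) = I(X_2;X_1|Y_1)`; consequently `C_L(X,W) ≤ I(X_1;X_2|Y_2)` and hence
`C_P(X,W) ≥ 2·C_L(X,W)`. -/
theorem reversible_condMutInf_symm
    {X Y : Type} [Fintype X] [Fintype Y] [Nonempty X] [Nonempty Y] [DecidableEq X]
    (μ : X → ℝ) (P : X → X → ℝ) (W : X → Y → ℝ)
    (hμ0 : ∀ x, 0 ≤ μ x) (hμ1 : ∑ x, μ x = 1)
    (hP0 : ∀ x x', 0 ≤ P x x') (hP1 : ∀ x, ∑ x', P x x' = 1)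
    (hinv : ∀ x', ∑ x, μ x * P x x' = μ x')
    (hirr : IrreducibleAperiodic (Matrix.of fun a b => P a b))
    (hW0 : ∀ x y, 0 ≤ W x y) (hW1 : ∀ x, ∑ y, W x y = 1)
    (hrev : ∀ x x', μ x * P x x' = μ x' * P x' x) :
    IX1X2gY2 μ P W = IX2X1gY1 μ P W ∧
    CL μ P W ≤ IX1X2gY2 μ P W ∧
    2 * CL μ P W ≤ CP μ P W :=
  reversible_condMutInf_symm_general μ P W hμ0 hP0 hP1 hW0 hW1 hrev
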